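/- arXiv:2303.07348 — 2 statements merged into one kernel-verified Lean document; each statement's English description precedes it below -/
import Mathlib

section
/- Let r be a natural number with r ≥ 2, let p ≥ 0, K > 0, m̃ ≥ 1 and C ≥ 1 be real numbers, let p₀ > p be real, and let r₀ be a natural number with r₀ > 2·(r + m̃·K + m̃·(2C)²). Suppose L : 𝓘 → ℝ is a nonnegative family satisfying: (i) L(α) ≤ m̃·K·α!·(r^{|α|³})!·(2ℕ)^{pα} for every α with |α| = 1; and (ii) L(α) ≤ m̃·( K·α!·(r^{|α|³})!·(2ℕ)^{pα} + ∑_{k=2}^{|α|} C^k · J_k(α) ) for every α with |α| ≥ 2, where J_k(α) = ∑ L(γ¹)⋯L(γᵏ) over all ordered k-tuples (γ¹, …, γᵏ) of nonzero multiindices with γ¹ + ⋯ + γᵏ = α. Then L(α) ≤ α!·(2ℕ)^{p₀α}·(r₀^{|α|³})! for every multiindex α with |α| ≥ 1. -/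
abbrev MultiIndex : Type := ℕ →₀ ℕ

/-- `|α| = ∑ₙ αₙ` -/
def msize (α : MultiIndex) : ℕ := α.sum fun _ k => k

/-- `α! = ∏ₙ (αₙ)!` -/
def mfact (α : MultiIndex) : ℕ := α.prod fun _ k => k.factorial

/-- `(2ℕ)^{cα} = ∏ₙ (2n)^{c·αₙ}`; the index `n : ℕ` stands for the position `n+1 ≥ 1`. -/
noncomputable def wt (c : ℝ) (α : MultiIndex) : ℝ :=
  α.prod fun n k => (2 * ((n : ℝ) + 1)) ^ (c * (k : ℝ))


/-- `J_k(α) = ∑ L(γ¹)⋯L(γᵏ)` over ordered `k`-tuples of nonzero multiindices summing to `α`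
(a finite sum, expressed via `finsum` over the (finite) set of such tuples). -/
noncomputable def Jsum (L : MultiIndex → ℝ) (k : ℕ) (α : MultiIndex) : ℝ :=
  ∑ᶠ γ ∈ {γ : Fin k → MultiIndex | (∀ i, γ i ≠ 0) ∧ ∑ i, γ i = α}, ∏ i, L (γ i)

/-
Strong induction on |α|. For |α| = n + 1 ≥ 2, every part of a tuple γ¹ + ⋯ + γᵏ = α has size
at most n, so by induction, multiplicativity of (2ℕ)^{p₀α}, the inequality ∏ γⁱ! ≤ α! and
∏ aᵢ! ≤ (∑ aᵢ)!, each product in J_k(α) is at most α!(2ℕ)^{p₀α}·M! with M = (n+1)·r₀^{n³}.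
There are at most 2^{|α|k} such tuples. Since r₀^{(n+1)³} exceeds M by more than (n+2)², the
factorial (r₀^{(n+1)³})! absorbs M! times r₀^{(n+2)²}, which dominates the constants
2m̃|α|C^{|α|}2^{|α|²}; the K-term is absorbed because r < r₀ and 2m̃K ≤ r₀.
-/

open Finset Nat

lemma msize_eq_degree (α : MultiIndex) : msize α = α.degree := rfl

lemma msize_sum {ι : Type*} (s : Finset ι) (γ : ι → MultiIndex) :
    msize (∑ i ∈ s, γ i) = ∑ i ∈ s, msize (γ i) := by
  simp only [msize_eq_degree, map_sum]

lemma one_le_msize {α : MultiIndex} (h : α ≠ 0) : 1 ≤ msize α := by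
  rw [Nat.one_le_iff_ne_zero, msize_eq_degree, Ne, Finsupp.degree_eq_zero_iff]
  exact h

lemma msize_lt_msize_sum {k : ℕ} (hk : 2 ≤ k) {γ : Fin k → MultiIndex} (hγ : ∀ i, γ i ≠ 0)
    (i : Fin k) : msize (γ i) < msize (∑ j, γ j) := by
  have : Nontrivial (Fin k) := Fin.nontrivial_iff_two_le.mpr hk
  obtain ⟨j, hji⟩ := exists_ne i
  rw [msize_sum, ← add_sum_erase _ _ (mem_univ i)]
  have := single_le_sum (f := fun l => msize (γ l)) (fun _ _ => Nat.zero_le _)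
    (mem_erase.mpr ⟨hji, mem_univ j⟩)
  have := one_le_msize (hγ j)
  omega

lemma prod_factorial_le_factorial_sum {ι : Type*} (s : Finset ι) (f : ι → ℕ) :
    ∏ i ∈ s, (f i)! ≤ (∑ i ∈ s, f i)! :=
  Nat.le_of_dvd (factorial_pos _) (prod_factorial_dvd_factorial_sum s f)

lemma prod_mfact_le_mfact_sum {ι : Type*} (s : Finset ι) (γ : ι → MultiIndex) :
    ∏ i ∈ s, mfact (γ i) ≤ mfact (∑ i ∈ s, γ i) := by
  classical
  set T := s.biUnion fun i => (γ i).support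
  have hmfact : ∀ {β : MultiIndex}, β.support ⊆ T → mfact β = ∏ n ∈ T, (β n)! :=
    fun h => Finsupp.prod_of_support_subset _ h _ fun _ _ => rfl
  have hsupp : (∑ i ∈ s, γ i).support ⊆ T := Finsupp.support_finsetSum
  have hsupp_i : ∀ i ∈ s, (γ i).support ⊆ T :=
    fun i hi => subset_biUnion_of_mem (fun i => (γ i).support) hi
  rw [hmfact hsupp, prod_congr rfl fun i hi => hmfact (hsupp_i i hi), prod_comm]
  refine prod_le_prod' fun n _ => ?_
  rw [Finsupp.finsetSum_apply]
  exact prod_factorial_le_factorial_sum _ _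

lemma wt_sum (c : ℝ) {ι : Type*} (s : Finset ι) (γ : ι → MultiIndex) :
    wt c (∑ i ∈ s, γ i) = ∏ i ∈ s, wt c (γ i) := by
  refine (Finsupp.prod_finsetSum_index (fun _ => by simp) fun n k l => ?_).symm
  rw [Nat.cast_add, mul_add c, Real.rpow_add (by positivity)]

lemma wt_nonneg (c : ℝ) (α : MultiIndex) : 0 ≤ wt c α :=
  prod_nonneg fun _ _ => Real.rpow_nonneg (by positivity) _

lemma wt_mono {c c' : ℝ} (h : c ≤ c') (α : MultiIndex) : wt c α ≤ wt c' α := by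
  refine prod_le_prod (fun _ _ => Real.rpow_nonneg (by positivity) _) fun n _ => ?_
  exact Real.rpow_le_rpow_of_exponent_le (by linarith [n.cast_nonneg (α := ℝ)])
    (mul_le_mul_of_nonneg_right h (Nat.cast_nonneg _))

lemma card_Iic_le_two_pow_msize (α : MultiIndex) : #(Iic α) ≤ 2 ^ msize α := by
  rw [Finsupp.card_Iic, msize, Finsupp.sum, ← prod_pow_eq_pow_sum]
  exact prod_le_prod' fun n _ => by simpa using (α n).lt_two_pow_self

lemma Jsum_eq_sum_filter (L : MultiIndex → ℝ) (k : ℕ) (α : MultiIndex) :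
    Jsum L k α = ∑ γ ∈ (Fintype.piFinset fun _ : Fin k => Iic α).filter
      (fun γ => (∀ i, γ i ≠ 0) ∧ ∑ i, γ i = α), ∏ i, L (γ i) := by
  have hS : {γ : Fin k → MultiIndex | (∀ i, γ i ≠ 0) ∧ ∑ i, γ i = α} =
      ↑((Fintype.piFinset fun _ : Fin k => Iic α).filter
        fun γ => (∀ i, γ i ≠ 0) ∧ ∑ i, γ i = α) := by
    ext γ
    simp only [coe_filter, Fintype.mem_piFinset, mem_Iic, Set.mem_ofPred_eq]
    refine ⟨fun h => ⟨fun i => ?_, h⟩, And.right⟩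
    rw [← h.2]
    exact single_le_sum (fun _ _ => zero_le) (mem_univ i)
  rw [Jsum, hS, finsum_mem_coe_finset]

lemma Jsum_le {L : MultiIndex → ℝ} {k : ℕ} {α : MultiIndex} {Q : ℝ} (hQ : 0 ≤ Q)
    (h : ∀ γ : Fin k → MultiIndex, (∀ i, γ i ≠ 0) → ∑ i, γ i = α → ∏ i, L (γ i) ≤ Q) :
    Jsum L k α ≤ 2 ^ (msize α * k) * Q := by
  classical
  rw [Jsum_eq_sum_filter]
  refine (sum_le_card_nsmul _ _ Q fun γ hγ => ?_).trans ?_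
  · obtain ⟨-, hγ0, hγα⟩ := mem_filter.mp hγ
    exact h γ hγ0 hγα
  rw [nsmul_eq_mul, pow_mul]
  refine mul_le_mul_of_nonneg_right ?_ hQ
  calc (#(filter _ _) : ℝ) ≤ #(Fintype.piFinset fun _ : Fin k => Iic α) := by
        exact_mod_cast card_filter_le _ _
    _ = (#(Iic α) : ℝ) ^ k := by rw [Fintype.card_piFinset_const]; push_cast; rfl
    _ ≤ ((2 : ℝ) ^ msize α) ^ k := by gcongr; exact_mod_cast card_Iic_le_two_pow_msize α

lemma sum_pow_mul_Jsum_le {L : MultiIndex → ℝ} {C Q : ℝ} (hC : 1 ≤ C) (hQ : 0 ≤ Q)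
    {α : MultiIndex} (h : ∀ k ∈ Icc 2 (msize α), ∀ γ : Fin k → MultiIndex,
      (∀ i, γ i ≠ 0) → ∑ i, γ i = α → ∏ i, L (γ i) ≤ Q) :
    ∑ k ∈ Icc 2 (msize α), C ^ k * Jsum L k α ≤
      msize α * C ^ msize α * 2 ^ (msize α * msize α) * Q := by
  set N := msize α
  calc ∑ k ∈ Icc 2 N, C ^ k * Jsum L k α ≤ ∑ _k ∈ Icc 2 N, C ^ N * (2 ^ (N * N) * Q) := by
        refine sum_le_sum fun k hk => ?_
        have hkN := (mem_Icc.mp hk).2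
        calc C ^ k * Jsum L k α ≤ C ^ k * (2 ^ (N * k) * Q) :=
              mul_le_mul_of_nonneg_left (Jsum_le hQ (h k hk)) (by positivity)
          _ ≤ C ^ N * (2 ^ (N * N) * Q) := by
              gcongr
              exact one_le_two
    _ ≤ N * C ^ N * 2 ^ (N * N) * Q := by
        rw [sum_const, nsmul_eq_mul, mul_assoc, mul_assoc]
        gcongr
        exact_mod_cast (card_Icc 2 N).trans_le (by omega)

lemma prod_le_of_forall_msize_lt {L : MultiIndex → ℝ} {p₀ : ℝ} {r₀ n k : ℕ}
    (hL0 : ∀ β, 0 ≤ L β) (hr₀ : 0 < r₀) {α : MultiIndex} (hα : msize α = n + 1)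
    (ih : ∀ β, 1 ≤ msize β → msize β < msize α →
      L β ≤ mfact β * wt p₀ β * (r₀ ^ msize β ^ 3)!)
    (hk : 2 ≤ k) (hkn : k ≤ n + 1) {γ : Fin k → MultiIndex} (hγ : ∀ i, γ i ≠ 0)
    (hsum : ∑ i, γ i = α) :
    ∏ i, L (γ i) ≤ mfact α * wt p₀ α * ((n + 1) * r₀ ^ n ^ 3)! := by
  have hlt : ∀ i, msize (γ i) < msize α := fun i => hsum ▸ msize_lt_msize_sum hk hγ i
  have hfact : ∏ i, (r₀ ^ msize (γ i) ^ 3)! ≤ ((n + 1) * r₀ ^ n ^ 3)! := calc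
    ∏ i, (r₀ ^ msize (γ i) ^ 3)! ≤ (∑ i, r₀ ^ msize (γ i) ^ 3)! :=
        prod_factorial_le_factorial_sum _ _
    _ ≤ ((n + 1) * r₀ ^ n ^ 3)! := factorial_le <| calc
        ∑ i, r₀ ^ msize (γ i) ^ 3 ≤ ∑ _i : Fin k, r₀ ^ n ^ 3 :=
          sum_le_sum fun i _ => Nat.pow_le_pow_right hr₀ <|
            Nat.pow_le_pow_left (by have := hlt i; omega) 3
        _ ≤ (n + 1) * r₀ ^ n ^ 3 := by
          rw [sum_const, Finset.card_univ, Fintype.card_fin, smul_eq_mul]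
          exact Nat.mul_le_mul_right _ hkn
  calc ∏ i, L (γ i) ≤ ∏ i, ((mfact (γ i) : ℝ) * wt p₀ (γ i) * (r₀ ^ msize (γ i) ^ 3)!) :=
        prod_le_prod (fun i _ => hL0 _) fun i _ => ih _ (one_le_msize (hγ i)) (hlt i)
    _ = (∏ i, mfact (γ i) : ℕ) * wt p₀ α * (∏ i, (r₀ ^ msize (γ i) ^ 3)! : ℕ) := by
        rw [← hsum, wt_sum, prod_mul_distrib, prod_mul_distrib]
        push_cast
        rfl
    _ ≤ mfact α * wt p₀ α * ((n + 1) * r₀ ^ n ^ 3)! := by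
        have := wt_nonneg p₀ α
        gcongr
        rw [← hsum]
        exact_mod_cast prod_mfact_le_mfact_sum _ _

lemma mul_factorial_pow_le {x : ℝ} {r r₀ N : ℕ} (hx : x ≤ r₀) (hr : r < r₀) (hN : N ≠ 0) :
    x * (r ^ N ^ 3)! ≤ (r₀ ^ N ^ 3)! := by
  have hlt : r ^ N ^ 3 < r₀ ^ N ^ 3 := Nat.pow_lt_pow_left hr (by positivity)
  calc x * (r ^ N ^ 3)! ≤ (r₀ ^ N ^ 3 : ℕ) * (r ^ N ^ 3)! := by
        gcongr
        exact hx.trans (by exact_mod_cast Nat.le_self_pow (by positivity) r₀)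
    _ ≤ (r₀ ^ N ^ 3)! := by
        rw [← mul_factorial_pred (by omega : r₀ ^ N ^ 3 ≠ 0)]
        exact_mod_cast Nat.mul_le_mul_left _ (factorial_le (by omega))

lemma pow_mul_factorial_le {r₀ n : ℕ} (hr₀ : 4 ≤ r₀) (hn : 1 ≤ n) :
    r₀ ^ (n + 2) ^ 2 * ((n + 1) * r₀ ^ n ^ 3)! ≤ (r₀ ^ (n + 1) ^ 3)! := by
  set M := (n + 1) * r₀ ^ n ^ 3
  have hr₀M : r₀ ≤ M + 1 := by
    have := Nat.le_self_pow (by positivity : n ^ 3 ≠ 0) r₀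
    have := Nat.le_mul_of_pos_left (r₀ ^ n ^ 3) (by omega : 0 < n + 1)
    omega
  have hgap : n + 1 + (n + 2) ^ 2 ≤ r₀ ^ (3 * n ^ 2 + 3 * n + 1) := calc
    n + 1 + (n + 2) ^ 2 ≤ 2 * (3 * n ^ 2 + 3 * n + 1) := by nlinarith
    _ ≤ 2 ^ (2 * (3 * n ^ 2 + 3 * n + 1)) := Nat.lt_two_pow_self.le
    _ = 4 ^ (3 * n ^ 2 + 3 * n + 1) := by rw [pow_mul]; norm_num
    _ ≤ r₀ ^ (3 * n ^ 2 + 3 * n + 1) := Nat.pow_le_pow_left hr₀ _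
  have hMB : M + (n + 2) ^ 2 ≤ r₀ ^ (n + 1) ^ 3 := calc
    M + (n + 2) ^ 2 ≤ r₀ ^ n ^ 3 * (n + 1 + (n + 2) ^ 2) := by
        simp only [M]
        nlinarith [Nat.one_le_pow (n ^ 3) r₀ (by omega)]
    _ ≤ r₀ ^ n ^ 3 * r₀ ^ (3 * n ^ 2 + 3 * n + 1) := Nat.mul_le_mul_left _ hgap
    _ = r₀ ^ (n + 1) ^ 3 := by rw [← pow_add]; ring_nf
  calc r₀ ^ (n + 2) ^ 2 * M ! ≤ M ! * (M + 1) ^ (n + 2) ^ 2 := by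
        rw [mul_comm]
        exact Nat.mul_le_mul_left _ (Nat.pow_le_pow_left hr₀M _)
    _ ≤ (M + (n + 2) ^ 2)! := factorial_mul_pow_le_factorial
    _ ≤ (r₀ ^ (n + 1) ^ 3)! := factorial_le hMB

lemma mul_pow_mul_two_pow_le {x C : ℝ} {r₀ N : ℕ} (hx : x ≤ r₀) (hC0 : 0 ≤ C)
    (hC : C ≤ r₀) (hr₀ : 2 ≤ r₀) : x * N * C ^ N * 2 ^ (N * N) ≤ (r₀ : ℝ) ^ (N + 1) ^ 2 := by
  have hN : (N : ℝ) ≤ (r₀ : ℝ) ^ N := by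
    exact_mod_cast N.lt_two_pow_self.le.trans (Nat.pow_le_pow_left hr₀ N)
  calc x * N * C ^ N * 2 ^ (N * N) ≤ r₀ * (r₀ : ℝ) ^ N * (r₀ : ℝ) ^ N * (r₀ : ℝ) ^ (N * N) := by
        refine mul_le_mul (mul_le_mul (mul_le_mul hx hN (by positivity) (by positivity))
          (pow_le_pow_left₀ hC0 hC N) (by positivity) (by positivity))
          (pow_le_pow_left₀ zero_le_two (by exact_mod_cast hr₀) _) (by positivity) (by positivity)
    _ = (r₀ : ℝ) ^ (N + 1) ^ 2 := by ring

lemma bounds_of_two_mul_lt {r r₀ : ℕ} {K mt C : ℝ} (hK : 0 < K) (hmt : 1 ≤ mt) (hC : 1 ≤ C)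
    (h : 2 * (r + mt * K + mt * (2 * C) ^ 2) < (r₀ : ℝ)) :
    r < r₀ ∧ 4 ≤ r₀ ∧ 2 * (mt * K) ≤ r₀ ∧ 2 * mt ≤ r₀ ∧ C ≤ r₀ := by
  have hmtK : 0 < mt * K := mul_pos (by linarith) hK
  have hC4 : 4 ≤ (2 * C) ^ 2 := by nlinarith
  have hmtC : 4 * mt ≤ mt * (2 * C) ^ 2 := by nlinarith
  have hCC : 4 * C ≤ mt * (2 * C) ^ 2 := by nlinarith
  have hr : (0 : ℝ) ≤ r := r.cast_nonneg
  refine ⟨by exact_mod_cast (by linarith : (r : ℝ) < r₀), ?_, by linarith, by linarith, by linarith⟩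
  exact_mod_cast (by linarith : (4 : ℝ) ≤ r₀)

section

variable {L : MultiIndex → ℝ} {r r₀ : ℕ} {p p₀ K mt C : ℝ}

lemma le_of_le_leading_term (hmt : 0 ≤ mt) (hK : 0 ≤ K) (hp : p ≤ p₀) (hr : r < r₀)
    (hmtK : 2 * (mt * K) ≤ r₀) {α : MultiIndex} (hα : msize α ≠ 0)
    (hLα : L α ≤ mt * K * mfact α * (r ^ msize α ^ 3)! * wt p α) :
    L α ≤ mfact α * wt p₀ α * (r₀ ^ msize α ^ 3)! := by
  have : 0 ≤ mt * K := mul_nonneg hmt hK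
  calc L α ≤ mt * K * mfact α * (r ^ msize α ^ 3)! * wt p₀ α := by
        have := wt_mono hp α
        refine hLα.trans ?_
        gcongr
    _ = mfact α * wt p₀ α * (mt * K * (r ^ msize α ^ 3)!) := by ring
    _ ≤ mfact α * wt p₀ α * (r₀ ^ msize α ^ 3)! := by
        have := wt_nonneg p₀ α
        gcongr
        exact mul_factorial_pow_le (by linarith) hr hα

lemma le_of_le_leading_term_add_sum_Jsum (hL0 : ∀ β, 0 ≤ L β) (hmt : 0 ≤ mt) (hK : 0 ≤ K) (hC : 1 ≤ C)
    (hp : p ≤ p₀) (hr : r < r₀) (hr₀ : 4 ≤ r₀) (hmtK : 2 * (mt * K) ≤ r₀) (hmt₀ : 2 * mt ≤ r₀)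
    (hC₀ : C ≤ r₀) {α : MultiIndex} (hα : 2 ≤ msize α)
    (hLα : L α ≤ mt * (K * mfact α * (r ^ msize α ^ 3)! * wt p α +
      ∑ k ∈ Icc 2 (msize α), C ^ k * Jsum L k α))
    (ih : ∀ β, 1 ≤ msize β → msize β < msize α →
      L β ≤ mfact β * wt p₀ β * (r₀ ^ msize β ^ 3)!) :
    L α ≤ mfact α * wt p₀ α * (r₀ ^ msize α ^ 3)! := by
  obtain ⟨n, hn⟩ : ∃ n, msize α = n + 1 := ⟨msize α - 1, by omega⟩
  set F : ℝ := mfact α * wt p₀ α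
  set M := (n + 1) * r₀ ^ n ^ 3
  have hF : 0 ≤ F := mul_nonneg (Nat.cast_nonneg _) (wt_nonneg p₀ α)
  have hJ := sum_pow_mul_Jsum_le (L := L) hC (mul_nonneg hF (Nat.cast_nonneg M !))
    fun k hk γ hγ hsum => prod_le_of_forall_msize_lt hL0 (by omega) hn ih
      (mem_Icc.mp hk).1 (hn ▸ (mem_Icc.mp hk).2) hγ hsum
  have hlin : 2 * (mt * K) * (r ^ msize α ^ 3)! ≤ (r₀ ^ msize α ^ 3)! :=
    mul_factorial_pow_le hmtK hr (by omega)
  have hrec : 2 * mt * msize α * C ^ msize α * 2 ^ (msize α * msize α) * M ! ≤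
      (r₀ ^ msize α ^ 3)! := by
    rw [hn]
    calc 2 * mt * ↑(n + 1) * C ^ (n + 1) * 2 ^ ((n + 1) * (n + 1)) * M !
        ≤ (r₀ : ℝ) ^ (n + 2) ^ 2 * M ! := by
          gcongr
          exact mul_pow_mul_two_pow_le hmt₀ (by linarith) hC₀ (by omega)
      _ ≤ (r₀ ^ (n + 1) ^ 3)! := by exact_mod_cast pow_mul_factorial_le hr₀ (by omega)
  calc L α ≤ mt * (K * mfact α * (r ^ msize α ^ 3)! * wt p₀ α +
        msize α * C ^ msize α * 2 ^ (msize α * msize α) * (F * M !)) := by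
        have := wt_mono hp α
        refine hLα.trans ?_
        gcongr
    _ = F / 2 * (2 * (mt * K) * (r ^ msize α ^ 3)! +
        2 * mt * msize α * C ^ msize α * 2 ^ (msize α * msize α) * M !) := by ring
    _ ≤ F / 2 * ((r₀ ^ msize α ^ 3)! + (r₀ ^ msize α ^ 3)!) := by gcongr
    _ = F * (r₀ ^ msize α ^ 3)! := by ring

end

theorem stmt_13_general (r : ℕ) (p K mt C : ℝ) (hK : 0 < K)
    (hmt : 1 ≤ mt) (hC : 1 ≤ C) (p₀ : ℝ) (hp₀ : p < p₀) (r₀ : ℕ)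
    (hr₀ : 2 * (r + mt * K + mt * (2 * C) ^ 2) < (r₀ : ℝ))
    (L : MultiIndex → ℝ) (hL0 : ∀ α, 0 ≤ L α)
    (h1 : ∀ α : MultiIndex, msize α = 1 →
      L α ≤ mt * K * (mfact α : ℝ) * ((r ^ (msize α) ^ 3).factorial : ℝ) * wt p α)
    (h2 : ∀ α : MultiIndex, 2 ≤ msize α →
      L α ≤ mt * (K * (mfact α : ℝ) * ((r ^ (msize α) ^ 3).factorial : ℝ) * wt p α +
        ∑ k ∈ Finset.Icc 2 (msize α), C ^ k * Jsum L k α)) :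
    ∀ α : MultiIndex, 1 ≤ msize α →
      L α ≤ (mfact α : ℝ) * wt p₀ α * ((r₀ ^ (msize α) ^ 3).factorial : ℝ) := by
  obtain ⟨hr, hr₀4, hmtK, hmt₀, hC₀⟩ := bounds_of_two_mul_lt hK hmt hC hr₀
  have hmt0 : 0 ≤ mt := zero_le_one.trans hmt
  intro α hα
  induction hN : msize α using Nat.strong_induction_on generalizing α with
  | _ N ih =>
  subst hN
  obtain hα1 | hα2 : msize α = 1 ∨ 2 ≤ msize α := by omega
  · exact le_of_le_leading_term hmt0 hK.le hp₀.le hr hmtK (by omega) (h1 α hα1)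
  · exact le_of_le_leading_term_add_sum_Jsum hL0 hmt0 hK.le hC hp₀.le hr hr₀4 hmtK hmt₀ hC₀ hα2
      (h2 α hα2)
      fun β hβ hlt => ih _ hlt β hβ rfl

theorem stmt_13 (r : ℕ) (hr : 2 ≤ r) (p K mt C : ℝ) (hp : 0 ≤ p) (hK : 0 < K)
    (hmt : 1 ≤ mt) (hC : 1 ≤ C) (p₀ : ℝ) (hp₀ : p < p₀) (r₀ : ℕ)
    (hr₀ : 2 * (r + mt * K + mt * (2 * C) ^ 2) < (r₀ : ℝ))
    (L : MultiIndex → ℝ) (hL0 : ∀ α, 0 ≤ L α)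
    (h1 : ∀ α : MultiIndex, msize α = 1 →
      L α ≤ mt * K * (mfact α : ℝ) * ((r ^ (msize α) ^ 3).factorial : ℝ) * wt p α)
    (h2 : ∀ α : MultiIndex, 2 ≤ msize α →
      L α ≤ mt * (K * (mfact α : ℝ) * ((r ^ (msize α) ^ 3).factorial : ℝ) * wt p α +
        ∑ k ∈ Finset.Icc 2 (msize α), C ^ k * Jsum L k α)) :
    ∀ α : MultiIndex, 1 ≤ msize α →
      L α ≤ (mfact α : ℝ) * wt p₀ α * ((r₀ ^ (msize α) ^ 3).factorial : ℝ) :=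
  stmt_13_general r p K mt C hK hmt hC p₀ hp₀ r₀ hr₀ L hL0 h1 h2
end

section
/- Let p₀ ≥ 0 and q > 2p₀ + 1 be real numbers, let r₀ ≥ 2 be a natural number, and let L : 𝓘 → ℝ be a family such that |L(α)| ≤ α!·(2ℕ)^{p₀α}·(r₀^{|α|³})! for every nonzero multiindex α (no condition on L(0)). Then, with s = r₀⁵, the family α ↦ L(α)² · α! · ((s^{|α|³})!)^{−1} · (2ℕ)^{−qα} is summable over 𝓘; in particular ∑_{α∈𝓘} L(α)²·α!·((s^{|α|³})!)^{−1}·(2ℕ)^{−qα} < ∞. -/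
/-! Put `F = r₀^{|α|³}`. Since `|α| ≤ F`, we get `(α!)⁴ (F!)² ≤ (F!)⁶ ≤ (F⁵)!`, and `F⁵ = s^{|α|³}`;
hence for `α ≠ 0` the summand is at most `(2ℕ)^{(2p₀-q)α} / α! = ∏ₙ xₙ^{αₙ} / αₙ!` with
`xₙ = (2n)^{2p₀-q}`. As `2p₀ - q < -1`, `∑ₙ xₙ` converges, and every finite partial sum of
`∏ₙ xₙ^{αₙ} / αₙ!` is bounded by `∏ₙ exp xₙ = exp (∑ₙ xₙ)`. -/

open Finset Filter

theorem Finset.sum_finsupp_prod_eq_prod_sum {ι α R : Type*} [Zero α] [CommSemiring R]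
    (s : Finset ι) (t : ι → Finset α) (g : ι → α → R) :
    ∑ f ∈ s.finsupp t, ∏ i ∈ s, g i (f i) = ∏ i ∈ s, ∑ a ∈ t i, g i a := by
  classical
  rw [prod_sum, Finset.finsupp, sum_map]
  refine sum_congr rfl fun f _ => ?_
  rw [← prod_attach]
  exact prod_congr rfl fun i _ => by
    simp only [Function.Embedding.coeFn_mk, Finsupp.indicator_of_mem i.2]

theorem summable_finsuppProd {ι : Type*} {g : ι → ℕ → ℝ} {C : ℝ} (hg : ∀ i k, 0 ≤ g i k)
    (hg₀ : ∀ i, g i 0 = 1) (hC : ∀ (s : Finset ι) (M : ℕ), ∏ i ∈ s, ∑ k ∈ range M, g i k ≤ C) :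
    Summable fun α : ι →₀ ℕ => α.prod g := by
  classical
  refine summable_of_sum_le (c := C) (fun α => prod_nonneg fun i _ => hg i _) fun T => ?_
  set s := T.sup Finsupp.support
  set M := T.sup (fun α => α.support.sup α) + 1
  have hsupp : ∀ α ∈ T, α.support ⊆ s := fun α hα => le_sup (f := Finsupp.support) hα
  have hmem : ∀ α ∈ T, α ∈ s.finsupp fun _ => range M := by
    intro α hα
    refine mem_finsupp_iff.2 ⟨hsupp α hα, fun i _ => mem_range.2 ?_⟩
    by_cases hi : i ∈ α.support
    · exact Nat.lt_succ_of_le <|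
        (le_sup hi).trans (le_sup (f := fun α : ι →₀ ℕ => α.support.sup α) hα)
    · rw [Finsupp.notMem_support_iff.1 hi]
      exact Nat.succ_pos _
  calc ∑ α ∈ T, α.prod g
      = ∑ α ∈ T, ∏ i ∈ s, g i (α i) :=
        sum_congr rfl fun α hα =>
          Finsupp.prod_of_support_subset α (hsupp α hα) g fun i _ => hg₀ i
    _ ≤ ∑ α ∈ s.finsupp fun _ => range M, ∏ i ∈ s, g i (α i) :=
        sum_le_sum_of_subset_of_nonneg hmem fun α _ _ =>
          prod_nonneg fun i _ => hg i _
    _ = ∏ i ∈ s, ∑ k ∈ range M, g i k := Finset.sum_finsupp_prod_eq_prod_sum s _ g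
    _ ≤ C := hC s M

theorem summable_finsuppProd_pow_div_factorial {ι : Type*} {x : ι → ℝ} (hx₀ : ∀ i, 0 ≤ x i)
    (hx : Summable x) :
    Summable fun α : ι →₀ ℕ => α.prod fun i k => x i ^ k / k.factorial := by
  refine summable_finsuppProd (C := Real.exp (∑' i, x i))
    (fun i k => by have := hx₀ i; positivity) (fun i => by simp) fun s M => ?_
  calc ∏ i ∈ s, ∑ k ∈ range M, x i ^ k / k.factorial
      ≤ ∏ i ∈ s, Real.exp (x i) :=
        prod_le_prod (fun i _ => sum_nonneg fun k _ => by have := hx₀ i; positivity)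
          fun i _ => Real.sum_le_exp_of_nonneg (hx₀ i) M
    _ = Real.exp (∑ i ∈ s, x i) := (Real.exp_sum s x).symm
    _ ≤ Real.exp (∑' i, x i) := Real.exp_le_exp.2 (hx.sum_le_tsum s fun i _ => hx₀ i)

theorem summable_two_mul_add_one_rpow {c : ℝ} (hc : c < -1) :
    Summable fun n : ℕ => (2 * ((n : ℝ) + 1)) ^ c := by
  have h : Summable fun n : ℕ => ((n : ℝ) + 1) ^ c := by
    simpa only [Nat.cast_add, Nat.cast_one] using
      (summable_nat_add_iff 1).2 (Real.summable_nat_rpow.2 hc)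
  refine (h.mul_left (2 ^ c)).congr fun n => ?_
  rw [Real.mul_rpow (by norm_num) (by positivity)]

theorem wt_eq_prod_pow (c : ℝ) (α : MultiIndex) :
    wt c α = α.prod fun n k => ((2 * ((n : ℝ) + 1)) ^ c) ^ k := by
  refine prod_congr rfl fun n _ => ?_
  dsimp only
  rw [← Real.rpow_natCast, ← Real.rpow_mul (by positivity)]

theorem wt_pos (c : ℝ) (α : MultiIndex) : 0 < wt c α :=
  prod_pos fun _ _ => Real.rpow_pos_of_pos (by positivity) _

theorem wt_add (a b : ℝ) (α : MultiIndex) : wt (a + b) α = wt a α * wt b α := by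
  simp only [wt_eq_prod_pow, Finsupp.prod, ← prod_mul_distrib, ← mul_pow]
  exact prod_congr rfl fun n _ => by rw [Real.rpow_add (by positivity)]

theorem wt_div_mfact (c : ℝ) (α : MultiIndex) :
    wt c α / mfact α = α.prod fun n k => ((2 * ((n : ℝ) + 1)) ^ c) ^ k / k.factorial := by
  rw [wt_eq_prod_pow, mfact, Nat.cast_finsuppProd, Finsupp.prod, Finsupp.prod, Finsupp.prod,
    prod_div_distrib]

theorem mfact_pos (α : MultiIndex) : 0 < mfact α :=
  prod_pos fun _ _ => Nat.factorial_pos _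

theorem mfact_le_factorial_msize (α : MultiIndex) : mfact α ≤ (msize α).factorial :=
  Nat.le_of_dvd (Nat.factorial_pos _) (Nat.prod_factorial_dvd_factorial_sum α.support α)

theorem Nat.factorial_pow_le_factorial_mul (n k : ℕ) : n.factorial ^ k ≤ (k * n).factorial :=
  Nat.le_of_dvd (Nat.factorial_pos _) <| by
    simpa using Nat.prod_factorial_dvd_factorial_sum (range k) fun _ => n

theorem Nat.factorial_pow_six_le_factorial_pow_five (n : ℕ) :
    n.factorial ^ 6 ≤ (n ^ 5).factorial := by
  rcases Nat.lt_or_ge n 2 with hn | hn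
  · interval_cases n <;> simp
  · calc n.factorial ^ 6 ≤ (6 * n).factorial := Nat.factorial_pow_le_factorial_mul n 6
      _ ≤ (n ^ 5).factorial := Nat.factorial_le <| by
        have : 2 ^ 4 ≤ n ^ 4 := Nat.pow_le_pow_left hn 4
        nlinarith

theorem mfact_pow_four_mul_factorial_sq_le {r : ℕ} (hr : 1 < r) (α : MultiIndex) :
    mfact α ^ 4 * (r ^ msize α ^ 3).factorial ^ 2 ≤ ((r ^ 5) ^ msize α ^ 3).factorial := by
  set m := msize α
  set F := r ^ m ^ 3
  have hmF : m ≤ F := (Nat.lt_pow_self hr).le.trans <|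
    Nat.pow_le_pow_right (by omega) (Nat.le_self_pow (by norm_num) m)
  have hm : mfact α ≤ F.factorial := (mfact_le_factorial_msize α).trans (Nat.factorial_le hmF)
  calc mfact α ^ 4 * F.factorial ^ 2 ≤ F.factorial ^ 4 * F.factorial ^ 2 :=
        Nat.mul_le_mul_right _ (Nat.pow_le_pow_left hm 4)
    _ = F.factorial ^ 6 := by ring
    _ ≤ (F ^ 5).factorial := Nat.factorial_pow_six_le_factorial_pow_five F
    _ = ((r ^ 5) ^ m ^ 3).factorial := by rw [pow_right_comm]

theorem sq_mul_mfact_mul_inv_mul_wt_le {p q y : ℝ} {r : ℕ} (hr : 1 < r) {α : MultiIndex}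
    (hy : |y| ≤ (mfact α : ℝ) * wt p α * ((r ^ msize α ^ 3).factorial : ℝ)) :
    y ^ 2 * (mfact α : ℝ) * (((r ^ 5) ^ msize α ^ 3).factorial : ℝ)⁻¹ * wt (-q) α ≤
      wt (2 * p - q) α / mfact α := by
  have hA : (0 : ℝ) < mfact α := by exact_mod_cast mfact_pos α
  have hAFB : (mfact α : ℝ) ^ 4 * ((r ^ msize α ^ 3).factorial : ℝ) ^ 2 ≤
      (((r ^ 5) ^ msize α ^ 3).factorial : ℝ) := by
    exact_mod_cast mfact_pow_four_mul_factorial_sq_le hr α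
  set A : ℝ := (mfact α : ℝ)
  set F : ℝ := ((r ^ msize α ^ 3).factorial : ℝ)
  set B : ℝ := (((r ^ 5) ^ msize α ^ 3).factorial : ℝ)
  have hB : 0 < B := by positivity
  have hP := wt_pos p α
  have hW := wt_pos (-q) α
  have hy2 : y ^ 2 ≤ (A * wt p α * F) ^ 2 := by
    rw [← sq_abs]
    exact pow_le_pow_left₀ (abs_nonneg y) hy 2
  have hwt : wt (2 * p - q) α = wt p α * wt p α * wt (-q) α := by
    rw [show 2 * p - q = p + p + -q by ring, wt_add, wt_add]
  rw [hwt, le_div_iff₀ hA]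
  calc y ^ 2 * A * B⁻¹ * wt (-q) α * A
      ≤ (A * wt p α * F) ^ 2 * A * B⁻¹ * wt (-q) α * A := by gcongr
    _ = (A ^ 4 * F ^ 2) * B⁻¹ * (wt p α * wt p α * wt (-q) α) := by ring
    _ ≤ B * B⁻¹ * (wt p α * wt p α * wt (-q) α) := by gcongr
    _ = wt p α * wt p α * wt (-q) α := by rw [mul_inv_cancel₀ hB.ne', one_mul]

theorem stmt_14_general (p₀ q : ℝ) (hq : 2 * p₀ + 1 < q) (r₀ : ℕ) (hr₀ : 2 ≤ r₀)
    (L : MultiIndex → ℝ)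
    (hL : ∀ α : MultiIndex, α ≠ 0 →
      |L α| ≤ (mfact α : ℝ) * wt p₀ α * ((r₀ ^ (msize α) ^ 3).factorial : ℝ)) :
    Summable (fun α : MultiIndex =>
      (L α) ^ 2 * (mfact α : ℝ) * (((r₀ ^ 5) ^ (msize α) ^ 3).factorial : ℝ)⁻¹ *
        wt (-q) α) := by
  have hmajorant : Summable fun α : MultiIndex => wt (2 * p₀ - q) α / mfact α := by
    simpa only [wt_div_mfact] using
      summable_finsuppProd_pow_div_factorial (fun n => by positivity)
        (summable_two_mul_add_one_rpow (by linarith : 2 * p₀ - q < -1))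
  refine hmajorant.of_norm_bounded_eventually ?_
  filter_upwards [eventually_cofinite_ne 0] with α hα
  have hterm : 0 ≤ L α ^ 2 * (mfact α : ℝ) * (((r₀ ^ 5) ^ msize α ^ 3).factorial : ℝ)⁻¹ *
      wt (-q) α := by
    have := wt_pos (-q) α
    positivity
  rw [Real.norm_of_nonneg hterm]
  exact sq_mul_mfact_mul_inv_mul_wt_le hr₀ (hL α hα)

theorem stmt_14 (p₀ q : ℝ) (hp₀ : 0 ≤ p₀) (hq : 2 * p₀ + 1 < q) (r₀ : ℕ) (hr₀ : 2 ≤ r₀)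
    (L : MultiIndex → ℝ)
    (hL : ∀ α : MultiIndex, α ≠ 0 →
      |L α| ≤ (mfact α : ℝ) * wt p₀ α * ((r₀ ^ (msize α) ^ 3).factorial : ℝ)) :
    Summable (fun α : MultiIndex =>
      (L α) ^ 2 * (mfact α : ℝ) * (((r₀ ^ 5) ^ (msize α) ^ 3).factorial : ℝ)⁻¹ *
        wt (-q) α) :=
  stmt_14_general p₀ q hq r₀ hr₀ L hL
end
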